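/- Fix k > 0 and a sequence (k'_n)_{n∈ℕ} of nonnegative reals, and set ν_n := k'_n + k(n−1) + 1/2. Let (λ(n))_{n∈ℕ} be a sequence with λ(n) ∈ ℝ^n satisfying λ(n)_1 ≥ λ(n)_2 ≥ … ≥ λ(n)_n ≥ 0, and let μ(n) ∈ ℝ^n denote the tuple with entries μ(n)_i = λ(n)_i²/ν_n. Then (μ(n))_{n∈ℕ} is a Vershik–Kerov sequence if and only if for every integer m ≥ 1 the limit lim_{n→∞} p_m(λ(n)²)/(n ν_n)^m exists in ℝ, where λ(n)² denotes the tuple of squares (λ(n)_1², …, λ(n)_n²). -/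

import Mathlib

/-!
Put `x n i = λ(n)_i² / (n ν_n)`: the VK limits are the limits of `x n i`, of `p_1(x n)` and of
`p_2(x n)`, and the power-sum limits are those of `p_m(x n)`. Since `x n` is decreasing,
`(i + 1) x_{n,i}² ≤ p_2(x n)`, so for `m ≥ 3` the terms `x_{n,i}^m` are dominated by a summable
`C (i + 1)^(-m/2)` and dominated convergence gives `p_m(x n) → Σ α_i^m`. Conversely, by induction
on `i` the power sums of the tail `(x_{n,j})_{j ≥ i}` converge, and they squeeze its largest entry:
`x_{n,i}^(m+2) ≤ Σ_{j ≥ i} x_{n,j}^(m+2) ≤ x_{n,i}^m Σ_{j ≥ i} x_{n,j}²`.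
-/

open Filter Topology

/-- `ν_n = k'_n + k(n-1) + 1/2`. -/
noncomputable def nuB (k : ℝ) (k' : ℕ → ℝ) (n : ℕ) : ℝ := k' n + k * ((n : ℝ) - 1) + 1 / 2

open Finset

lemma le_of_forall_pow_add_two_le_pow_mul {a b C : ℝ} (hb : 0 ≤ b)
    (h : ∀ m : ℕ, a ^ (m + 2) ≤ b ^ m * C) : a ≤ b := by
  by_contra! hba
  have ha : 0 < a := hb.trans_lt hba
  have hlim : Tendsto (fun m : ℕ => (b / a) ^ m * C) atTop (𝓝 0) := by
    simpa using (tendsto_pow_atTop_nhds_zero_of_lt_one (div_nonneg hb ha.le)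
      ((div_lt_one ha).2 hba)).mul_const C
  have hsq : a ^ 2 ≤ 0 := by
    refine ge_of_tendsto hlim (Eventually.of_forall fun m => ?_)
    rw [div_pow, div_mul_eq_mul_div, le_div_iff₀ (pow_pos ha m), ← pow_add, add_comm]
    exact h m
  nlinarith

/-- Any two cluster points `c`, `d` of `y` satisfy `c ^ (m + 2) ≤ d ^ m * lim S 0` for all `m`,
which forces `c ≤ d`. -/
lemma exists_tendsto_of_pow_le_of_le_pow_mul {y : ℕ → ℝ} {S : ℕ → ℕ → ℝ} {L : ℕ → ℝ}
    (hy : ∀ n, 0 ≤ y n) (hS : ∀ m, Tendsto (S m) atTop (𝓝 (L m)))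
    (hlow : ∀ m n, y n ^ (m + 2) ≤ S m n) (hup : ∀ m n, S m n ≤ y n ^ m * S 0 n) :
    ∃ l, Tendsto y atTop (𝓝 l) := by
  obtain ⟨M, hM⟩ := (hS 0).bddAbove_range
  have hmem : ∀ n, y n ∈ Set.Icc 0 √M := fun n =>
    ⟨hy n, Real.le_sqrt_of_sq_le ((hlow 0 n).trans (hM (Set.mem_range_self n)))⟩
  have hcluster : ∀ c d, MapClusterPt c atTop y → MapClusterPt d atTop y → c ≤ d := by
    intro c d hc hd
    obtain ⟨φ, hφ, hyφ⟩ := hc.tendsto_subseq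
    obtain ⟨ψ, hψ, hyψ⟩ := hd.tendsto_subseq
    refine le_of_forall_pow_add_two_le_pow_mul (C := L 0) (ge_of_tendsto' hyψ fun j => hy _)
      fun m => ?_
    calc c ^ (m + 2) ≤ L m :=
          le_of_tendsto_of_tendsto' (hyφ.pow _) ((hS m).comp hφ.tendsto_atTop)
            fun j => hlow m _
      _ ≤ d ^ m * L 0 :=
          le_of_tendsto_of_tendsto' ((hS m).comp hψ.tendsto_atTop)
            ((hyψ.pow m).mul ((hS 0).comp hψ.tendsto_atTop)) fun j => hup m _
  obtain ⟨a, -, ha⟩ := isCompact_Icc.exists_mapClusterPt (f := atTop)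
    (tendsto_principal.2 (Eventually.of_forall hmem))
  exact ⟨a, isCompact_Icc.tendsto_nhds_of_unique_mapClusterPt (Eventually.of_forall hmem)
    fun c _ hc => (hcluster c a hc ha).antisymm (hcluster a c ha hc)⟩

section Vector

variable {v : ℕ → ℝ} {n : ℕ}

lemma pow_le_sum_Ico_pow (hv : ∀ j, 0 ≤ v j) (hpad : ∀ j, n ≤ j → v j = 0) (i : ℕ) {k : ℕ}
    (hk : k ≠ 0) : v i ^ k ≤ ∑ j ∈ Ico i n, v j ^ k := by
  rcases lt_or_ge i n with hi | hi
  · exact single_le_sum (f := fun j => v j ^ k) (fun j _ => pow_nonneg (hv j) k)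
      (mem_Ico.2 ⟨le_rfl, hi⟩)
  · rw [hpad i hi, zero_pow hk]
    exact sum_nonneg fun j _ => pow_nonneg (hv j) k

lemma sum_Ico_pow_add_two_le (hv : ∀ j, 0 ≤ v j) (hanti : Antitone v) (i m : ℕ) :
    ∑ j ∈ Ico i n, v j ^ (m + 2) ≤ v i ^ m * ∑ j ∈ Ico i n, v j ^ 2 := by
  rw [mul_sum]
  refine sum_le_sum fun j hj => ?_
  rw [pow_add]
  exact mul_le_mul_of_nonneg_right
    (pow_le_pow_left₀ (hv j) (hanti (mem_Ico.1 hj).1) m) (sq_nonneg _)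

lemma sq_le_div_of_sum_sq_le (hv : ∀ j, 0 ≤ v j) (hanti : Antitone v)
    (hpad : ∀ j, n ≤ j → v j = 0) {M : ℝ} (hM : ∑ j ∈ range n, v j ^ 2 ≤ M) (i : ℕ) :
    v i ^ 2 ≤ M / (i + 1) := by
  have hM0 : 0 ≤ M := (sum_nonneg fun j _ => sq_nonneg (v j)).trans hM
  rw [le_div_iff₀ (by positivity)]
  rcases lt_or_ge i n with hi | hi
  · calc v i ^ 2 * (i + 1) = ∑ j ∈ range (i + 1), v i ^ 2 := by simp [mul_comm]
      _ ≤ ∑ j ∈ range (i + 1), v j ^ 2 := sum_le_sum fun j hj =>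
          pow_le_pow_left₀ (hv i) (hanti (Nat.lt_succ_iff.1 (mem_range.1 hj))) 2
      _ ≤ ∑ j ∈ range n, v j ^ 2 := sum_le_sum_of_subset_of_nonneg
          (range_subset_range.2 hi) fun j _ _ => sq_nonneg _
      _ ≤ M := hM
  · simp [hpad i hi, hM0]

end Vector

section Triangular

variable {x : ℕ → ℕ → ℝ}

lemma exists_tendsto_apply_of_tendsto_sum_pow (hx : ∀ n j, 0 ≤ x n j)
    (hanti : ∀ n, Antitone (x n)) (hpad : ∀ n j, n ≤ j → x n j = 0)
    (hS : ∀ m, 2 ≤ m → ∃ L, Tendsto (fun n => ∑ j ∈ range n, x n j ^ m) atTop (𝓝 L)) (i : ℕ) :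
    ∃ l, Tendsto (fun n => x n i) atTop (𝓝 l) := by
  induction i using Nat.strong_induction_on with
  | _ i ih =>
  choose! α hα using ih
  have htail : ∀ m, ∃ L, Tendsto (fun n => ∑ j ∈ Ico i n, x n j ^ (m + 2)) atTop (𝓝 L) := by
    intro m
    obtain ⟨L, hL⟩ := hS (m + 2) (by omega)
    have hhead : Tendsto (fun n => ∑ j ∈ range i, x n j ^ (m + 2)) atTop
        (𝓝 (∑ j ∈ range i, α j ^ (m + 2))) :=
      tendsto_finsetSum _ fun j hj => (hα j (mem_range.1 hj)).pow _
    refine ⟨_, (hL.sub hhead).congr' ?_⟩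
    filter_upwards [eventually_ge_atTop i] with n hn
    rw [sub_eq_iff_eq_add', range_eq_Ico, range_eq_Ico, sum_Ico_consecutive _ (Nat.zero_le i) hn]
  choose L hL using htail
  exact exists_tendsto_of_pow_le_of_le_pow_mul (fun n => hx n i) hL
    (fun m n => pow_le_sum_Ico_pow (hx n) (hpad n) i (by omega))
    (fun m n => sum_Ico_pow_add_two_le (hx n) (hanti n) i m)

lemma tendsto_sum_pow_of_tendsto_apply (hx : ∀ n j, 0 ≤ x n j)
    (hanti : ∀ n, Antitone (x n)) (hpad : ∀ n j, n ≤ j → x n j = 0)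
    {α : ℕ → ℝ} (hα : ∀ i, Tendsto (fun n => x n i) atTop (𝓝 (α i)))
    (hbdd : BddAbove (Set.range fun n => ∑ j ∈ range n, x n j ^ 2)) {m : ℕ} (hm : 3 ≤ m) :
    Tendsto (fun n => ∑ j ∈ range n, x n j ^ m) atTop (𝓝 (∑' i, α i ^ m)) := by
  obtain ⟨M, hM⟩ := hbdd
  have hM0 : 0 ≤ M := by simpa using hM (Set.mem_range_self 0)
  have hbound : ∀ n i, ‖x n i ^ m‖ ≤ (M / (i + 1)) ^ ((m : ℝ) / 2) := by
    intro n i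
    have hsq : x n i ^ m = (x n i ^ 2) ^ ((m : ℝ) / 2) := by
      rw [← Real.rpow_natCast_mul (hx n i), Nat.cast_ofNat, mul_div_cancel₀ _ two_ne_zero,
        Real.rpow_natCast]
    rw [Real.norm_of_nonneg (pow_nonneg (hx n i) m), hsq]
    exact Real.rpow_le_rpow (sq_nonneg _)
      (sq_le_div_of_sum_sq_le (hx n) (hanti n) (hpad n) (hM (Set.mem_range_self n)) i)
      (by positivity)
  have hsum : Summable fun i : ℕ => (M / (i + 1)) ^ ((m : ℝ) / 2) := by
    have hp : Summable fun i : ℕ => 1 / ((i + 1 : ℕ) : ℝ) ^ ((m : ℝ) / 2) :=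
      (summable_nat_add_iff 1).mpr (Real.summable_one_div_nat_rpow.mpr (by
        rw [lt_div_iff₀ two_pos]; exact_mod_cast hm))
    refine (hp.mul_left (M ^ ((m : ℝ) / 2))).congr fun i => ?_
    rw [Real.div_rpow hM0 (by positivity)]
    push_cast
    ring
  refine (tendsto_tsum_of_dominated_convergence hsum (fun i => (hα i).pow m)
    (Eventually.of_forall hbound)).congr fun n => ?_
  exact tsum_eq_sum fun i hi => by simp [hpad n i (by simpa using hi), show m ≠ 0 by omega]

theorem vershikKerov_iff_tendsto_sum_pow (hx : ∀ n j, 0 ≤ x n j)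
    (hanti : ∀ n, Antitone (x n)) (hpad : ∀ n j, n ≤ j → x n j = 0) :
    ((∃ α : ℕ → ℝ, ∀ i, Tendsto (fun n => x n i) atTop (𝓝 (α i))) ∧
      (∃ β, Tendsto (fun n => ∑ j ∈ range n, x n j) atTop (𝓝 β)) ∧
      (∃ δ, Tendsto (fun n => ∑ j ∈ range n, x n j ^ 2) atTop (𝓝 δ))) ↔
    ∀ m, 1 ≤ m → ∃ L, Tendsto (fun n => ∑ j ∈ range n, x n j ^ m) atTop (𝓝 L) := by
  constructor
  · rintro ⟨⟨α, hα⟩, ⟨β, hβ⟩, ⟨δ, hδ⟩⟩ m hm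
    match m, hm with
    | 1, _ => exact ⟨β, by simpa using hβ⟩
    | 2, _ => exact ⟨δ, hδ⟩
    | m + 3, _ => exact ⟨_, tendsto_sum_pow_of_tendsto_apply hx hanti hpad hα
        hδ.bddAbove_range (by omega)⟩
  · intro h
    choose α hα using exists_tendsto_apply_of_tendsto_sum_pow hx hanti hpad
      fun m hm => h m (by omega)
    exact ⟨⟨α, hα⟩, by simpa using h 1 le_rfl, h 2 one_le_two⟩

end Triangular

lemma nuB_mul_natCast_nonneg {k : ℝ} (hk : 0 ≤ k) {k' : ℕ → ℝ} (n : ℕ) (hk' : 0 ≤ k' n) :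
    0 ≤ nuB k k' n * n := by
  rcases Nat.eq_zero_or_pos n with rfl | hn
  · simp
  · have : (1 : ℝ) ≤ n := by exact_mod_cast hn
    exact mul_nonneg (by unfold nuB; nlinarith) (Nat.cast_nonneg n)

lemma antitone_of_succ_le_of_eq_zero {v : ℕ → ℝ} {n : ℕ} (hv : ∀ j, 0 ≤ v j)
    (hpad : ∀ j, n ≤ j → v j = 0) (hsucc : ∀ j, j + 1 < n → v (j + 1) ≤ v j) : Antitone v := by
  refine antitone_nat_of_succ_le fun j => ?_
  rcases lt_or_ge (j + 1) n with hj | hj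
  · exact hsucc j hj
  · rw [hpad _ hj]
    exact hv j

/-- For `λ(n) ∈ ℝ^n` with `λ(n)_1 ≥ … ≥ λ(n)_n ≥ 0` and
`μ(n)_i = λ(n)_i²/ν_n`, the sequence `(μ(n))` is Vershik–Kerov if and only if for every
`m ≥ 1` the limit `lim_n p_m(λ(n)²)/(nν_n)^m` exists. -/
theorem vk_B_iff_power_sum_limits (k : ℝ) (hk : 0 < k)
    (k' : ℕ → ℝ) (hk' : ∀ n, 0 ≤ k' n)
    (Λ : ℕ → ℕ → ℝ)
    (hpad : ∀ n i, n ≤ i → Λ n i = 0)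
    (hmono : ∀ n i, i + 1 < n → Λ n (i + 1) ≤ Λ n i)
    (hpos : ∀ n i, 0 ≤ Λ n i) :
    ((∃ α : ℕ → ℝ, ∀ i, Tendsto
        (fun n : ℕ => ((Λ n i) ^ 2 / nuB k k' n) / (n : ℝ)) atTop (𝓝 (α i))) ∧
     (∃ β : ℝ, Tendsto
        (fun n : ℕ => (∑ i ∈ Finset.range n, (Λ n i) ^ 2 / nuB k k' n) / (n : ℝ))
        atTop (𝓝 β)) ∧
     (∃ δ : ℝ, Tendsto
        (fun n : ℕ => (∑ i ∈ Finset.range n, ((Λ n i) ^ 2 / nuB k k' n) ^ 2) / (n : ℝ) ^ 2)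
        atTop (𝓝 δ)))
    ↔ (∀ m : ℕ, 1 ≤ m →
        ∃ L : ℝ, Tendsto
          (fun n : ℕ => (∑ i ∈ Finset.range n, (Λ n i) ^ (2 * m)) / ((n : ℝ) * nuB k k' n) ^ m)
          atTop (𝓝 L)) := by
  have hden n := nuB_mul_natCast_nonneg hk.le n (hk' n)
  have hanti n := antitone_of_succ_le_of_eq_zero (hpos n) (hpad n) (hmono n)
  have key := vershikKerov_iff_tendsto_sum_pow (x := fun n i => Λ n i ^ 2 / nuB k k' n / n)
    (fun n i => by rw [div_div]; exact div_nonneg (sq_nonneg _) (hden n))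
    (fun n a b hab => by
      simp only [div_div]
      exact div_le_div_of_nonneg_right (pow_le_pow_left₀ (hpos n b) (hanti n hab) 2) (hden n))
    (fun n i hi => by simp [hpad n i hi])
  have hpow n i m : Λ n i ^ (2 * m) / ((n : ℝ) * nuB k k' n) ^ m
      = (Λ n i ^ 2 / nuB k k' n / n) ^ m := by
    rw [div_div, div_pow, pow_mul, mul_comm (n : ℝ)]
  simpa only [sum_div, hpow, div_pow] using key
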